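/- arXiv:1311.1339 — 2 statements merged into one kernel-verified Lean document; each statement's English description precedes it below -/
import Mathlib

section
/- Let n > K and let D be a zero-padded code of length n for DTPC(N,K) such that every codeword of D either begins with the symbol N, or begins with the prefix i ∘ 0^K for some i ∈ {0,1,…,N−1}. Then D is a zero-error code if and only if the code D^{⟨N⟩} = {v ∈ {0,…,N}^{n−1} : N ∘ v ∈ D} of length n−1 and the codes D^{⟨i∘0^K⟩} = {v ∈ {0,…,N}^{n−K−1} : i ∘ 0^K ∘ v ∈ D} of length n−K−1 for i = 0,1,…,N−1 are all zero-error codes for DTPC(N,K). -/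
/-- `Produces K x z`: the input sequence `x` (numbers of particles sent per slot) can
produce the output sequence `z` (of length `x.length + K`, numbers of particles received
per slot) through the channel DTPC(·, K): there are delays `d i j` (the number of
particles sent in slot `i` that are delayed by `j ∈ {0, …, K}` slots) accounting for all
sent particles, such that the particles received in slot `t` are exactly those sent in
slot `i` and delayed by `j` slots with `i + j = t` (slots indexed from `0`). -/
def Produces (K : ℕ) (x z : List ℕ) : Prop :=
  z.length = x.length + K ∧
  ∃ d : ℕ → ℕ → ℕ,
    (∀ i < x.length, ∑ j ∈ Finset.range (K + 1), d i j = x.getD i 0) ∧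
    (∀ t < x.length + K,
      z.getD t 0 =
        ∑ i ∈ Finset.range x.length, ∑ j ∈ Finset.range (K + 1),
          if i + j = t then d i j else 0)

/-- A code of length `n` for DTPC(N, K): a set of sequences over `{0, 1, …, N}` of length `n`. -/
def IsCode (N n : ℕ) (C : Finset (List ℕ)) : Prop :=
  ∀ x ∈ C, x.length = n ∧ ∀ a ∈ x, a ≤ N

/-- Zero-error code for DTPC(N, K): for every `m ≥ 1`, no two distinct concatenations of
`m` codewords can produce the same channel output. -/
def IsZeroError (N K n : ℕ) (C : Finset (List ℕ)) : Prop :=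
  IsCode N n C ∧
  ∀ L₁ L₂ : List (List ℕ),
    L₁.length = L₂.length → 1 ≤ L₁.length →
    (∀ w ∈ L₁, w ∈ C) → (∀ w ∈ L₂, w ∈ C) →
    L₁.flatten ≠ L₂.flatten →
    ∀ z : List ℕ, ¬ (Produces K L₁.flatten z ∧ Produces K L₂.flatten z)

/-- Zero-padded code: every codeword ends with `min n K` zeros. -/
def IsZeroPadded (K n : ℕ) (C : Finset (List ℕ)) : Prop :=
  ∀ x ∈ C, List.replicate (min n K) 0 <:+ x

/-- The code obtained from `D` by keeping the codewords with prefix `u` and removing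
this prefix from them: `D^{⟨u⟩} = {v : u ∘ v ∈ D}`. -/
def stripPrefix (u : List ℕ) (D : Finset (List ℕ)) : Finset (List ℕ) :=
  (D.filter fun x => u <+: x).image fun x => x.drop u.length

/-!
Sending `x` can produce `z` iff the prefix sums (`prefixSum`) satisfy
`P_z(t) ≤ P_x(t) ≤ P_z(t + K)` for all `t`: given these inequalities, deliver the particles in
the order they were sent. Hence `x` and `y` have a common output iff they are `Confusable`:
`P_x(t) ≤ P_y(t + K)` and `P_y(t) ≤ P_x(t + K)` for all `t`.

The `K` trailing zeros of a codeword of a zero-padded code let all of its particles arrive before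
the next codeword is sent, so two concatenations of codewords are confusable iff they are
confusable codeword by codeword; thus a zero-padded code is zero-error iff no two distinct
codewords are confusable. For `D`, comparing `P(1)` with `P(K + 1)` separates the prefix `N` from
the prefixes `i ∘ 0^K`, and these from each other, while `u ∘ v` and `u ∘ w` are confusable iff
`v` and `w` are.
-/

open Finset

def prefixSum (x : List ℕ) (t : ℕ) : ℕ := (x.take t).sum

@[simp]
lemma prefixSum_zero (x : List ℕ) : prefixSum x 0 = 0 := by
  simp [prefixSum]

lemma prefixSum_of_length_le {x : List ℕ} {t : ℕ} (h : x.length ≤ t) :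
    prefixSum x t = x.sum := by
  rw [prefixSum, List.take_of_length_le h]

lemma prefixSum_le_sum (x : List ℕ) (t : ℕ) : prefixSum x t ≤ x.sum :=
  (List.take_sublist t x).sum_le_sum fun _ _ => Nat.zero_le _

lemma prefixSum_mono (x : List ℕ) : Monotone (prefixSum x) := fun _ _ hst =>
  (List.take_prefix_take_left hst).sublist.sum_le_sum fun _ _ => Nat.zero_le _

lemma prefixSum_append (u v : List ℕ) (t : ℕ) :
    prefixSum (u ++ v) t = prefixSum u t + prefixSum v (t - u.length) := by
  rw [prefixSum, List.take_append, List.sum_append]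
  rfl

lemma prefixSum_succ (x : List ℕ) (t : ℕ) :
    prefixSum x (t + 1) = prefixSum x t + x.getD t 0 := by
  rcases lt_or_ge t x.length with h | h
  · rw [prefixSum, List.sum_take_succ _ _ h, List.getD_eq_getElem _ _ h]
    rfl
  · rw [prefixSum_of_length_le h, prefixSum_of_length_le (by omega), List.getD_eq_default _ _ h,
      Nat.add_zero]

lemma prefixSum_eq_sum_range (x : List ℕ) (t : ℕ) :
    prefixSum x t = ∑ k ∈ range t, x.getD k 0 := by
  induction t with
  | zero => simp
  | succ t ih => rw [prefixSum_succ, ih, sum_range_succ]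

lemma prefixSum_map_range_sub {Q : ℕ → ℕ} (hQ : Monotone Q) (hQ0 : Q 0 = 0) (L t : ℕ) :
    prefixSum ((List.range L).map fun s => Q (s + 1) - Q s) t = Q (min t L) := by
  rw [prefixSum, ← List.map_take, List.take_range, ← Nat.sub_zero (Q _), ← hQ0,
    ← sum_range_tsub hQ, sum_eq_multiset_sum]
  rfl

lemma prefixSum_sub_eq_sum {K : ℕ} {a : List ℕ} (ha : List.replicate (min a.length K) 0 <:+ a) :
    prefixSum a (a.length - K) = a.sum := by
  obtain ⟨c, hc⟩ := ha
  have hlen : c.length + min a.length K = a.length := by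
    simpa only [List.length_append, List.length_replicate] using congrArg List.length hc
  rw [← hc, prefixSum_append,
    prefixSum_of_length_le (by simp only [List.length_append, List.length_replicate]; omega),
    List.sum_append]
  simp [prefixSum]

lemma sum_range_sum_sum_ite_eq {M : Type*} [AddCommMonoid M] (s u : Finset ℕ) (f : ℕ → ℕ → ℕ)
    (g : ℕ → ℕ → M) (t : ℕ) :
    ∑ k ∈ range t, ∑ i ∈ s, ∑ j ∈ u, (if f i j = k then g i j else 0) =
      ∑ i ∈ s, ∑ j ∈ u, if f i j < t then g i j else 0 := by
  rw [sum_comm]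
  refine sum_congr rfl fun i _ => ?_
  rw [sum_comm]
  refine sum_congr rfl fun j _ => ?_
  simp [mem_range]

lemma Produces.prefixSum_le {K : ℕ} {x z : List ℕ} (h : Produces K x z) (t : ℕ) :
    prefixSum z t ≤ prefixSum x t ∧ prefixSum x t ≤ prefixSum z (t + K) := by
  obtain ⟨hlen, d, hd, hz⟩ := h
  have hx : ∀ k, x.getD k 0 =
      ∑ i ∈ range x.length, ∑ j ∈ range (K + 1), if i = k then d i j else 0 := by
    intro k
    simp only [sum_ite_irrel, sum_const_zero, sum_ite_eq', mem_range]
    split_ifs with hk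
    · exact (hd k hk).symm
    · exact List.getD_eq_default _ _ (not_lt.1 hk)
  have hz' : ∀ k, z.getD k 0 =
      ∑ i ∈ range x.length, ∑ j ∈ range (K + 1), if i + j = k then d i j else 0 := by
    intro k
    rcases lt_or_ge k (x.length + K) with hk | hk
    · exact hz k hk
    · rw [List.getD_eq_default _ _ (by omega)]
      refine (sum_eq_zero fun i hi => sum_eq_zero fun j hj => if_neg ?_).symm
      have := mem_range.1 hi
      have := mem_range.1 hj
      omega
  -- a particle sent in slot `i` with delay `j` counts towards `P_x t` iff `i < t`
  -- and towards `P_z t` iff `i + j < t`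
  have hPx : ∀ t, prefixSum x t =
      ∑ i ∈ range x.length, ∑ j ∈ range (K + 1), if i < t then d i j else 0 := fun t => by
    rw [prefixSum_eq_sum_range, sum_congr rfl fun k _ => hx k,
      sum_range_sum_sum_ite_eq _ _ fun i _ => i]
  have hPz : ∀ t, prefixSum z t =
      ∑ i ∈ range x.length, ∑ j ∈ range (K + 1), if i + j < t then d i j else 0 := fun t => by
    rw [prefixSum_eq_sum_range, sum_congr rfl fun k _ => hz' k, sum_range_sum_sum_ite_eq]
  rw [hPx, hPz, hPz]
  constructor <;> refine sum_le_sum fun i _ => sum_le_sum fun j hj => ?_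
  · split_ifs <;> omega
  · have := mem_range.1 hj
    split_ifs <;> omega

lemma sum_card_inter_Ioc {f : ℕ → ℕ} (hf : Monotone f) (A : Finset ℕ) (i m : ℕ) :
    ∑ j ∈ range m, #(A ∩ Ioc (f (i + j)) (f (i + j + 1))) = #(A ∩ Ioc (f i) (f (i + m))) := by
  induction m with
  | zero => simp
  | succ m ih =>
    rw [sum_range_succ, ih, ← Ioc_union_Ioc_eq_Ioc (hf (Nat.le_add_right i m))
        (hf (by omega : i + m ≤ i + (m + 1))),
      inter_union_distrib_left, card_union_of_disjoint]
    · rfl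
    · exact (Ioc_disjoint_Ioc_of_le le_rfl).mono inf_le_right inf_le_right

lemma produces_of_prefixSum_le {K : ℕ} {x z : List ℕ} (hlen : z.length = x.length + K)
    (h : ∀ t, prefixSum z t ≤ prefixSum x t ∧ prefixSum x t ≤ prefixSum z (t + K)) :
    Produces K x z := by
  /- Number the particles `1, 2, …`; particle `p` is sent in slot `i` iff `p ∈ A i` and
  received in slot `s` iff `p ∈ B s`. The hypothesis says that every particle is received
  between `0` and `K` slots after it was sent. -/
  set A : ℕ → Finset ℕ := fun i => Ioc (prefixSum x i) (prefixSum x (i + 1))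
  set B : ℕ → Finset ℕ := fun s => Ioc (prefixSum z s) (prefixSum z (s + 1))
  refine ⟨hlen, fun i j => #(A i ∩ B (i + j)), fun i _ => ?_, fun t ht => ?_⟩
  · have hsent : A i ⊆ Ioc (prefixSum z i) (prefixSum z (i + (K + 1))) :=
      Ioc_subset_Ioc (h i).1 (by simpa only [add_right_comm, add_assoc] using (h (i + 1)).2)
    rw [sum_card_inter_Ioc (prefixSum_mono z), inter_eq_left.2 hsent, Nat.card_Ioc,
      prefixSum_succ, Nat.add_sub_cancel_left]
  · have hslot : ∀ i, ∑ j ∈ range (K + 1), (if i + j = t then #(A i ∩ B (i + j)) else 0) =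
        #(B t ∩ A i) := by
      intro i
      by_cases hit : i ≤ t ∧ t ≤ i + K
      · rw [sum_eq_single_of_mem (t - i) (mem_range.2 (by omega)) fun j _ hj => if_neg (by omega),
          if_pos (by omega), Nat.add_sub_cancel' hit.1, inter_comm]
      · rw [sum_eq_zero fun j hj => if_neg (by have := mem_range.1 hj; omega), eq_comm,
          card_eq_zero, ← disjoint_iff_inter_eq_empty, Ioc_disjoint_Ioc]
        rcases Nat.lt_or_ge t i with hti | hti
        · have := prefixSum_mono x (show t + 1 ≤ i by omega)
          have := (h (t + 1)).1
          omega
        · have := prefixSum_mono z (show i + 1 + K ≤ t by omega)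
          have := (h (i + 1)).2
          omega
    have hreceived : B t ⊆ Ioc (prefixSum x 0) (prefixSum x x.length) := by
      refine Ioc_subset_Ioc (by simp) ?_
      rw [prefixSum_of_length_le le_rfl]
      exact (h (t + 1)).1.trans (prefixSum_le_sum x _)
    have hpartition := sum_card_inter_Ioc (prefixSum_mono x) (B t) 0 x.length
    simp only [zero_add] at hpartition
    rw [sum_congr rfl fun i _ => hslot i, hpartition, inter_eq_left.2 hreceived, Nat.card_Ioc,
      prefixSum_succ, Nat.add_sub_cancel_left]

lemma produces_iff {K : ℕ} {x z : List ℕ} :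
    Produces K x z ↔ z.length = x.length + K ∧
      ∀ t, prefixSum z t ≤ prefixSum x t ∧ prefixSum x t ≤ prefixSum z (t + K) :=
  ⟨fun h => ⟨h.1, h.prefixSum_le⟩, fun h => produces_of_prefixSum_le h.1 h.2⟩

def Confusable (K : ℕ) (x y : List ℕ) : Prop :=
  x.length = y.length ∧
    ∀ t, prefixSum x t ≤ prefixSum y (t + K) ∧ prefixSum y t ≤ prefixSum x (t + K)

namespace Confusable

variable {K : ℕ} {x y : List ℕ}

lemma refl (K : ℕ) (x : List ℕ) : Confusable K x x :=
  ⟨rfl, fun t => ⟨prefixSum_mono x (Nat.le_add_right t K), prefixSum_mono x (Nat.le_add_right t K)⟩⟩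

lemma symm (h : Confusable K x y) : Confusable K y x :=
  ⟨h.1.symm, fun t => (h.2 t).symm⟩

lemma sum_eq (h : Confusable K x y) : x.sum = y.sum := by
  have hl := h.1
  have hxy := (h.2 x.length).1
  have hyx := (h.2 y.length).2
  rw [prefixSum_of_length_le le_rfl, prefixSum_of_length_le (by omega)] at hxy hyx
  omega

lemma exists_produces (h : Confusable K x y) : ∃ z, Produces K x z ∧ Produces K y z := by
  -- every particle is received as early as both inputs allow
  set Q : ℕ → ℕ := fun t => min (prefixSum x t) (prefixSum y t)
  have hQ : Monotone Q := fun s t hst => min_le_min (prefixSum_mono x hst) (prefixSum_mono y hst)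
  have hproduces : ∀ {a b : List ℕ}, Confusable K a b → a.length = x.length →
      (∀ t, min (prefixSum a t) (prefixSum b t) = Q t) →
      Produces K a ((List.range (x.length + K)).map fun s => Q (s + 1) - Q s) := by
    intro a b hab ha hQab
    have hb := hab.1
    refine produces_iff.2 ⟨by simp [ha], fun t => ?_⟩
    rw [prefixSum_map_range_sub hQ (by simp [Q]), prefixSum_map_range_sub hQ (by simp [Q]),
      ← hQab, ← hQab]
    refine ⟨(min_le_left _ _).trans (prefixSum_mono a (min_le_left _ _)), ?_⟩
    rcases le_total (t + K) (x.length + K) with ht | ht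
    · rw [min_eq_left ht]
      exact le_min (prefixSum_mono a (Nat.le_add_right t K)) (hab.2 t).1
    · rw [min_eq_right ht, prefixSum_of_length_le (by omega : a.length ≤ x.length + K),
        prefixSum_of_length_le (by omega : b.length ≤ x.length + K), ← hab.sum_eq, min_self]
      exact prefixSum_le_sum a t
  exact ⟨_, hproduces h rfl fun t => rfl, hproduces h.symm h.1.symm fun t => min_comm _ _⟩

lemma of_produces {z : List ℕ} (hx : Produces K x z) (hy : Produces K y z) : Confusable K x y :=
  ⟨by rw [← Nat.add_right_cancel_iff (n := K), ← hx.1, hy.1], fun t =>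
    ⟨(hx.prefixSum_le t).2.trans (hy.prefixSum_le (t + K)).1,
      (hy.prefixSum_le t).2.trans (hx.prefixSum_le (t + K)).1⟩⟩

lemma prefixSum_append_le {x' y' : List ℕ} (h : Confusable K x y) (h' : Confusable K x' y')
    (t : ℕ) : prefixSum (x ++ x') t ≤ prefixSum (y ++ y') (t + K) := by
  have hl := h.1
  rw [prefixSum_append, prefixSum_append]
  rcases lt_or_ge t x.length with ht | ht
  · rw [Nat.sub_eq_zero_of_le ht.le, prefixSum_zero]
    exact (h.2 t).1.trans (Nat.le_add_right _ _)
  · rw [prefixSum_of_length_le ht, prefixSum_of_length_le (by omega : y.length ≤ t + K), h.sum_eq,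
      show t + K - y.length = t - x.length + K by omega]
    exact Nat.add_le_add_left ((h'.2 _).1) _

lemma append {x' y' : List ℕ} (h : Confusable K x y) (h' : Confusable K x' y') :
    Confusable K (x ++ x') (y ++ y') :=
  ⟨by simp [h.1, h'.1], fun t =>
    ⟨h.prefixSum_append_le h' t, h.symm.prefixSum_append_le h'.symm t⟩⟩

lemma prefixSum_le_of_append {X Y : List ℕ} (h : Confusable K (x ++ X) (y ++ Y))
    (hl : x.length = y.length) (hs : x.sum = y.sum) (t : ℕ) :
    prefixSum x t ≤ prefixSum y (t + K) ∧ prefixSum X t ≤ prefixSum Y (t + K) := by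
  constructor
  · rcases le_total (t + K) y.length with ht | ht
    · simpa [prefixSum_append, Nat.sub_eq_zero_of_le ht, Nat.sub_eq_zero_of_le
        ((Nat.le_add_right t K).trans (ht.trans_eq hl.symm))] using (h.2 t).1
    · rw [prefixSum_of_length_le ht, ← hs]
      exact prefixSum_le_sum x t
  · have hXY := (h.2 (x.length + t)).1
    rw [prefixSum_append, prefixSum_append, prefixSum_of_length_le (by omega),
      prefixSum_of_length_le (by omega : y.length ≤ x.length + t + K), hs,
      show x.length + t - x.length = t by omega,
      show x.length + t + K - y.length = t + K by omega] at hXY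
    omega

lemma of_append {X Y : List ℕ} (h : Confusable K (x ++ X) (y ++ Y)) (hl : x.length = y.length)
    (hs : x.sum = y.sum) : Confusable K x y ∧ Confusable K X Y := by
  have hX := h.1
  simp only [List.length_append] at hX
  exact ⟨⟨hl, fun t => ⟨(h.prefixSum_le_of_append hl hs t).1,
      (h.symm.prefixSum_le_of_append hl.symm hs.symm t).1⟩⟩,
    ⟨by omega, fun t => ⟨(h.prefixSum_le_of_append hl hs t).2,
      (h.symm.prefixSum_le_of_append hl.symm hs.symm t).2⟩⟩⟩

lemma of_append_left {u : List ℕ} (h : Confusable K (u ++ x) (u ++ y)) : Confusable K x y :=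
  (h.of_append rfl rfl).2

lemma sum_le_of_append {X Y : List ℕ} (h : Confusable K (x ++ X) (y ++ Y))
    (hl : x.length = y.length) (hx : List.replicate (min x.length K) 0 <:+ x) :
    x.sum ≤ y.sum := by
  rcases le_total K x.length with hK | hK
  · -- all of `x` is sent by slot `|x| - K`, so `y ++ Y` must have delivered `x.sum` by slot `|x|`
    have hsent := (h.2 (x.length - K)).1
    rw [prefixSum_append, prefixSum_append, prefixSum_sub_eq_sum hx, Nat.sub_add_cancel hK, ← hl,
      Nat.sub_self, prefixSum_zero, prefixSum_of_length_le hl.ge] at hsent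
    omega
  · rw [← prefixSum_sub_eq_sum hx, Nat.sub_eq_zero_of_le hK, prefixSum_zero]
    exact Nat.zero_le _

lemma forall₂_of_flatten {ℓ : ℕ} {V W : List (List ℕ)}
    (hV : ∀ a ∈ V, a.length = ℓ ∧ List.replicate (min ℓ K) 0 <:+ a)
    (hW : ∀ b ∈ W, b.length = ℓ ∧ List.replicate (min ℓ K) 0 <:+ b)
    (hlen : V.length = W.length) (h : Confusable K V.flatten W.flatten) :
    List.Forall₂ (Confusable K) V W := by
  induction V generalizing W with
  | nil =>
    obtain rfl := List.length_eq_zero_iff.1 hlen.symm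
    exact .nil
  | cons a V ih =>
    obtain _ | ⟨b, W⟩ := W
    · simp at hlen
    obtain ⟨⟨ha, hpa⟩, hV⟩ := List.forall_mem_cons.1 hV
    obtain ⟨⟨hb, hpb⟩, hW⟩ := List.forall_mem_cons.1 hW
    rw [List.flatten_cons, List.flatten_cons] at h
    have hl : a.length = b.length := ha.trans hb.symm
    have hs : a.sum = b.sum := le_antisymm (h.sum_le_of_append hl (ha ▸ hpa))
      (h.symm.sum_le_of_append hl.symm (hb ▸ hpb))
    obtain ⟨hab, hVW⟩ := h.of_append hl hs
    exact .cons hab (ih hV hW (by simpa using hlen) hVW)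

lemma head_le {a b : ℕ} {v w : List ℕ}
    (h : Confusable K (a :: v) (b :: (List.replicate K 0 ++ w))) : a ≤ b := by
  simpa [prefixSum, add_comm 1 K] using (h.2 1).1

end Confusable

lemma confusable_iff_exists_produces {K : ℕ} {x y : List ℕ} :
    Confusable K x y ↔ ∃ z, Produces K x z ∧ Produces K y z :=
  ⟨Confusable.exists_produces, fun ⟨_, hx, hy⟩ => Confusable.of_produces hx hy⟩

def IsConfusionFree (K : ℕ) (C : Finset (List ℕ)) : Prop :=
  ∀ x ∈ C, ∀ y ∈ C, Confusable K x y → x = y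

lemma isZeroError_iff_isConfusionFree {N K n : ℕ} {C : Finset (List ℕ)} (hC : IsCode N n C)
    (hpad : IsZeroPadded K n C) : IsZeroError N K n C ↔ IsConfusionFree K C := by
  constructor
  · rintro ⟨-, hzero⟩ x hx y hy hxy
    by_contra hne
    obtain ⟨z, hz⟩ := confusable_iff_exists_produces.1 hxy
    exact hzero [x] [y] rfl le_rfl (by simp [hx]) (by simp [hy]) (by simpa) z (by simpa using hz)
  · intro hfree
    refine ⟨hC, fun L₁ L₂ hlen _ h₁ h₂ hne z hz => hne (congrArg List.flatten ?_)⟩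
    have hword : ∀ L : List (List ℕ), (∀ w ∈ L, w ∈ C) →
        ∀ a ∈ L, a.length = n ∧ List.replicate (min n K) 0 <:+ a :=
      fun L hL a ha => ⟨(hC a (hL a ha)).1, hpad a (hL a ha)⟩
    have hconf := List.forall₂_iff_zip.1 <| Confusable.forall₂_of_flatten (hword L₁ h₁)
      (hword L₂ h₂) hlen (confusable_iff_exists_produces.2 ⟨z, hz⟩)
    rw [← List.forall₂_eq_eq_eq, List.forall₂_iff_zip]
    exact ⟨hlen, fun hab => hfree _ (h₁ _ (List.of_mem_zip hab).1) _ (h₂ _ (List.of_mem_zip hab).2)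
      (hconf.2 hab)⟩

lemma mem_stripPrefix {u v : List ℕ} {D : Finset (List ℕ)} : v ∈ stripPrefix u D ↔ u ++ v ∈ D := by
  simp only [stripPrefix, mem_image, mem_filter]
  constructor
  · rintro ⟨_, ⟨hx, r, rfl⟩, rfl⟩
    rwa [List.drop_left]
  · exact fun hv => ⟨u ++ v, ⟨hv, List.prefix_append u v⟩, List.drop_left⟩

lemma IsCode.stripPrefix {N n m : ℕ} {u : List ℕ} {D : Finset (List ℕ)} (hD : IsCode N n D)
    (hm : u.length + m = n) : IsCode N m (stripPrefix u D) := by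
  intro v hv
  obtain ⟨hlen, hsymb⟩ := hD _ (mem_stripPrefix.1 hv)
  rw [List.length_append] at hlen
  exact ⟨by omega, fun a ha => hsymb a (List.mem_append_right u ha)⟩

lemma IsZeroPadded.stripPrefix {K n m : ℕ} {u : List ℕ} {D : Finset (List ℕ)}
    (hD : IsZeroPadded K n D) (hlen : ∀ x ∈ D, x.length = n) (hm : u.length + m = n) :
    IsZeroPadded K m (stripPrefix u D) := by
  intro v hv
  have huv := mem_stripPrefix.1 hv
  have hv_len : v.length = m := by
    have := hlen _ huv
    rw [List.length_append] at this
    omega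
  have hzeros : List.replicate (min m K) 0 <:+ List.replicate (min n K) 0 :=
    ⟨List.replicate (min n K - min m K) 0, by rw [List.replicate_append_replicate]; congr 1; omega⟩
  exact List.suffix_of_suffix_length_le (hzeros.trans (hD _ huv)) (List.suffix_append u v)
    (by simp [hv_len])

lemma IsConfusionFree.stripPrefix {K : ℕ} {D : Finset (List ℕ)} (h : IsConfusionFree K D)
    (u : List ℕ) : IsConfusionFree K (stripPrefix u D) := fun _ hv _ hw hvw =>
  List.append_cancel_left <|
    h _ (mem_stripPrefix.1 hv) _ (mem_stripPrefix.1 hw) ((Confusable.refl K u).append hvw)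

lemma isConfusionFree_of_stripPrefix {N K : ℕ} {D : Finset (List ℕ)}
    (hform : ∀ x ∈ D, (∃ v : List ℕ, x = N :: v) ∨
      ∃ i < N, ∃ v : List ℕ, x = (i :: List.replicate K 0) ++ v)
    (hN : IsConfusionFree K (stripPrefix [N] D))
    (hlow : ∀ i < N, IsConfusionFree K (stripPrefix (i :: List.replicate K 0) D)) :
    IsConfusionFree K D := by
  intro x hx y hy hxy
  rcases hform x hx with ⟨v, rfl⟩ | ⟨i, hi, v, rfl⟩ <;>
    rcases hform y hy with ⟨w, rfl⟩ | ⟨j, hj, w, rfl⟩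
  · rw [hN v (mem_stripPrefix.2 hx) w (mem_stripPrefix.2 hy) (hxy.of_append_left (u := [N]))]
  · exact absurd hxy.head_le (not_le.2 hj)
  · exact absurd hxy.symm.head_le (not_le.2 hi)
  · obtain rfl : i = j := le_antisymm hxy.head_le hxy.symm.head_le
    rw [hlow i hi v (mem_stripPrefix.2 hx) w (mem_stripPrefix.2 hy) hxy.of_append_left]

theorem zero_error_iff_derived_codes_zero_error_general (N K n : ℕ) (hn : K < n)
    (D : Finset (List ℕ)) (hcode : IsCode N n D) (hpad : IsZeroPadded K n D)
    (hform : ∀ x ∈ D, (∃ v : List ℕ, x = N :: v) ∨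
      ∃ i < N, ∃ v : List ℕ, x = (i :: List.replicate K 0) ++ v) :
    IsZeroError N K n D ↔
      (IsZeroError N K (n - 1) (stripPrefix [N] D) ∧
        ∀ i < N, IsZeroError N K (n - K - 1) (stripPrefix (i :: List.replicate K 0) D)) := by
  have hlen : ∀ x ∈ D, x.length = n := fun x hx => (hcode x hx).1
  have hderived : ∀ {u : List ℕ} {m : ℕ}, u.length + m = n →
      (IsZeroError N K m (stripPrefix u D) ↔ IsConfusionFree K (stripPrefix u D)) := fun hm =>
    isZeroError_iff_isConfusionFree (hcode.stripPrefix hm) (hpad.stripPrefix hlen hm)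
  rw [isZeroError_iff_isConfusionFree hcode hpad, hderived (by simp; omega)]
  simp only [hderived (u := _ :: List.replicate K 0) (m := n - K - 1) (by simp; omega)]
  exact ⟨fun h => ⟨h.stripPrefix _, fun i _ => h.stripPrefix _⟩,
    fun h => isConfusionFree_of_stripPrefix hform h.1 h.2⟩

/-- A zero-padded code `D` of length `n > K`, each codeword of which begins with the
symbol `N` or with a prefix `i ∘ 0^K` for some `i < N`, is zero-error if and only if
the derived codes `D^{⟨N⟩}` (of length `n-1`) and `D^{⟨i ∘ 0^K⟩}` for `i < N`
(of length `n-K-1`) are all zero-error. -/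
theorem zero_error_iff_derived_codes_zero_error (N K n : ℕ) (hN : 1 ≤ N) (hn : K < n)
    (D : Finset (List ℕ)) (hcode : IsCode N n D) (hpad : IsZeroPadded K n D)
    (hform : ∀ x ∈ D, (∃ v : List ℕ, x = N :: v) ∨
      ∃ i < N, ∃ v : List ℕ, x = (i :: List.replicate K 0) ++ v) :
    IsZeroError N K n D ↔
      (IsZeroError N K (n - 1) (stripPrefix [N] D) ∧
        ∀ i < N, IsZeroError N K (n - K - 1) (stripPrefix (i :: List.replicate K 0) D)) :=
  zero_error_iff_derived_codes_zero_error_general N K n hn D hcode hpad hform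
end

section
/- For every n ≥ 0, the greedily constructed code D_{N,K}(n) coincides with the recursively defined code C_{N,K}(n). -/
/-- The recursively defined codes `C_{N,K}(n)`: for `n ≤ K` the only codeword is `0^n`;
for `n > K`, `C_{N,K}(n) = (N ∘ C_{N,K}(n-1)) ∪ ⋃_{i<N} (i ∘ 0^K ∘ C_{N,K}(n-K-1))`. -/
def CNK (N K : ℕ) : ℕ → Finset (List ℕ)
  | n =>
    if _h : n ≤ K then {List.replicate n 0}
    else
      ((CNK N K (n - 1)).image fun v => N :: v) ∪
        (Finset.range N).biUnion fun i =>
          (CNK N K (n - K - 1)).image fun v => (i :: List.replicate K 0) ++ v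
  decreasing_by
    · omega
    · omega

/-- For padded sequences of the same length: `x ⤳ y`, i.e. `x` can produce `y ∘ 0^K`. -/
def ProducesPadded (K : ℕ) (x y : List ℕ) : Prop :=
  Produces K x (y ++ List.replicate K 0)

/-- Greedy selection along a list: select the first remaining sequence `x` as a codeword,
exclude every later sequence `y` with `x ⤳ y`, and repeat. -/
def greedySelect (R : List ℕ → List ℕ → Prop) [DecidableRel R] :
    List (List ℕ) → Finset (List ℕ)
  | [] => ∅
  | x :: rest => insert x (greedySelect R (rest.filter fun y => !(decide (R x y))))
  termination_by l => l.length
  decreasing_by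
    simp_wf
    have := List.length_filter_le (fun y => !(decide (R x y))) rest
    have key : ∀ p : {y // y ∈ rest} → Bool, (rest.attach.filter p).length ≤ rest.length :=
      fun p => by simpa using List.length_filter_le p rest.attach
    first
      | omega
      | exact Nat.lt_succ_of_le (key _)
      | (have := key (fun y => !(decide (R x y))); omega)
      | (have := key (fun y => !(decide (R x y))); simp at this ⊢; omega)

/-- All sequences of length `n` over `{0, …, N}`, listed in decreasing lexicographic
order. -/
def allSeqs (N : ℕ) : ℕ → List (List ℕ)
  | 0 => [[]]
  | n + 1 => ((List.range (N + 1)).reverse).flatMap fun a => (allSeqs N n).map (a :: ·)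

/-- The greedily constructed code `D_{N,K}(n)`: list all sequences of `{0, …, N}^n`
ending with `min n K` zeros in decreasing lexicographic order and select greedily. -/
noncomputable def DNK (N K n : ℕ) : Finset (List ℕ) :=
  @greedySelect (ProducesPadded K) (fun _ _ => Classical.propDecidable _)
    ((allSeqs N n).filter fun x => decide (List.replicate (min n K) 0 <:+ x))

/-!
Matching particles first in, first out shows that `x` can produce `z` exactly when their prefix
sums `X`, `Z` satisfy `Z t ≤ X t ≤ Z (t + K)` for all `t`; for padded words of equal length this
is the relation `Dominates`. A word dominates only itself and lexicographically smaller words, so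
the greedy code is the unique set `C` of candidates such that a candidate lies in `C` iff no
larger member of `C` dominates it. `CNK` has this property: no codeword dominates another
(compare first slots, then recurse), and every candidate `x` is dominated by a codeword. If the
first `K + 1` slots of `x` carry `c < N` particles, that codeword is `c ∘ 0^K ∘ y`, otherwise it
is `N ∘ y`, where `y` dominates what is left of `x` once its earliest `c` (resp. `N`) particles
and its first `K + 1` (resp. `1`) slots are removed.
-/

namespace DTPC

open Finset

def prefixSum (x : List ℕ) (t : ℕ) : ℕ := (x.take t).sum

@[simp] lemma prefixSum_zero (x : List ℕ) : prefixSum x 0 = 0 := by simp [prefixSum]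

@[simp] lemma prefixSum_cons_succ (a : ℕ) (x : List ℕ) (t : ℕ) :
    prefixSum (a :: x) (t + 1) = a + prefixSum x t := by
  simp [prefixSum]

lemma prefixSum_succ (x : List ℕ) (t : ℕ) :
    prefixSum x (t + 1) = prefixSum x t + x.getD t 0 := by
  induction x generalizing t with
  | nil => simp [prefixSum]
  | cons a x ih => cases t <;> simp [ih, Nat.add_assoc]

lemma prefixSum_eq_sum_range (x : List ℕ) (t : ℕ) :
    prefixSum x t = ∑ i ∈ range t, x.getD i 0 := by
  induction t with
  | zero => simp
  | succ t ih => rw [prefixSum_succ, ih, sum_range_succ]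

lemma prefixSum_mono (x : List ℕ) : Monotone (prefixSum x) :=
  monotone_nat_of_le_succ fun t => by rw [prefixSum_succ]; omega

lemma prefixSum_of_length_le {x : List ℕ} {t : ℕ} (h : x.length ≤ t) :
    prefixSum x t = x.sum := by
  rw [prefixSum, List.take_of_length_le h]

lemma prefixSum_le_sum (x : List ℕ) (t : ℕ) : prefixSum x t ≤ x.sum := by
  rw [← prefixSum_of_length_le (Nat.le_add_left x.length t)]
  exact prefixSum_mono x (Nat.le_add_right t _)

lemma prefixSum_append (p x : List ℕ) (t : ℕ) :
    prefixSum (p ++ x) t = prefixSum p t + prefixSum x (t - p.length) := by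
  simp [prefixSum, List.take_append]

@[simp] lemma prefixSum_replicate_zero (m t : ℕ) : prefixSum (List.replicate m 0) t = 0 := by
  simp [prefixSum, List.take_replicate]

lemma prefixSum_drop (x : List ℕ) (k u : ℕ) :
    prefixSum (x.drop k) u = prefixSum x (k + u) - prefixSum x k := by
  induction x generalizing k with
  | nil => simp [prefixSum]
  | cons a x ih =>
    cases k with
    | zero => simp
    | succ k => simp [ih, Nat.add_right_comm k 1 u, Nat.add_sub_add_left]

lemma sum_range_sum_sum_ite_eq {ι κ M : Type*} [AddCommMonoid M] (s : Finset ι) (s' : Finset κ)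
    (g : ι → κ → ℕ) (d : ι → κ → M) (u : ℕ) :
    ∑ t ∈ range u, ∑ i ∈ s, ∑ j ∈ s', (if g i j = t then d i j else 0) =
      ∑ i ∈ s, ∑ j ∈ s', if g i j < u then d i j else 0 := by
  rw [sum_comm]
  refine sum_congr rfl fun i _ => ?_
  rw [sum_comm]
  simp only [sum_ite_eq, mem_range]

lemma Produces.prefixSum_le {K : ℕ} {x z : List ℕ} (h : Produces K x z) (t : ℕ) :
    prefixSum z t ≤ prefixSum x t ∧ prefixSum x t ≤ prefixSum z (t + K) := by
  obtain ⟨hz, d, hx, hzd⟩ := h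
  have hz' : ∀ t, z.getD t 0 = ∑ i ∈ range x.length, ∑ j ∈ range (K + 1),
      if i + j = t then d i j else 0 := by
    intro t
    rcases lt_or_ge t (x.length + K) with ht | ht
    · exact hzd t ht
    · rw [List.getD_eq_default _ _ (by omega)]
      refine (sum_eq_zero fun i hi => sum_eq_zero fun j hj => if_neg ?_).symm
      simp only [mem_range] at hi hj
      omega
  have hx' : ∀ t, x.getD t 0 = ∑ i ∈ range x.length, ∑ j ∈ range (K + 1),
      if i = t then d i j else 0 := by
    intro t
    simp only [sum_ite_irrel, sum_const_zero, sum_ite_eq', mem_range]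
    split_ifs with ht
    · exact (hx t ht).symm
    · exact List.getD_eq_default _ _ (by omega)
  have hSz : ∀ u, prefixSum z u = ∑ i ∈ range x.length, ∑ j ∈ range (K + 1),
      if i + j < u then d i j else 0 := fun u => by
    simp only [prefixSum_eq_sum_range, hz', sum_range_sum_sum_ite_eq]
  have hSx : ∀ u, prefixSum x u = ∑ i ∈ range x.length, ∑ j ∈ range (K + 1),
      if i < u then d i j else 0 := fun u => by
    rw [prefixSum_eq_sum_range]
    simp only [hx']
    exact sum_range_sum_sum_ite_eq _ _ (fun i _ => i) d u
  rw [hSz, hSx, hSz]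
  constructor <;> refine sum_le_sum fun i _ => sum_le_sum fun j hj => ?_ <;>
    simp only [mem_range] at hj <;> split_ifs <;> omega

lemma sum_range_min_sub_max (a b : ℕ) {c : ℕ → ℕ} (hc : Monotone c) (m : ℕ) :
    ∑ j ∈ range m, (min b (c (j + 1)) - max a (c j)) =
      min b (max a (c m)) - min b (max a (c 0)) := by
  have hclamp : Monotone fun j => min b (max a (c j)) :=
    fun i j hij => min_le_min_left _ (max_le_max_left _ (hc hij))
  rw [← sum_range_tsub hclamp]
  refine sum_congr rfl fun j _ => ?_
  have := hc j.le_succ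
  omega

lemma produces_of_prefixSum_le {K : ℕ} {x z : List ℕ} (hz : z.length = x.length + K)
    (h : ∀ t, prefixSum z t ≤ prefixSum x t ∧ prefixSum x t ≤ prefixSum z (t + K)) :
    Produces K x z := by
  -- Particles travel first in, first out: `d i j` counts the particle numbers lying both in
  -- `[X i, X (i+1))` (sent in slot `i`) and in `[Z (i+j), Z (i+j+1))` (received in slot `i+j`),
  -- where `X`, `Z` are the prefix sums of `x`, `z`.
  refine ⟨hz, fun i j => min (prefixSum x (i + 1)) (prefixSum z (i + j + 1)) -
    max (prefixSum x i) (prefixSum z (i + j)), fun i _ => ?_, fun t _ => ?_⟩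
  · have hZ : Monotone fun j => prefixSum z (i + j) := fun a b hab => prefixSum_mono z (by omega)
    refine (sum_range_min_sub_max _ _ hZ (K + 1)).trans ?_
    have := (h i).1
    have := (h (i + 1)).2
    have := prefixSum_succ x i
    rw [add_zero, ← Nat.add_assoc, Nat.add_right_comm i K 1]
    omega
  · have hvanish : ∀ i, t < i ∨ i + K < t →
        min (prefixSum z (t + 1)) (prefixSum x (i + 1)) -
          max (prefixSum z t) (prefixSum x i) = 0 := by
      rintro i (hi | hi)
      · have := (h (t + 1)).1
        have := prefixSum_mono x (show t + 1 ≤ i by omega)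
        omega
      · have := (h (i + 1)).2
        have := prefixSum_mono z (show i + 1 + K ≤ t by omega)
        omega
    have hinner : ∀ i ∈ range x.length,
        (∑ j ∈ range (K + 1), if i + j = t then
          min (prefixSum x (i + 1)) (prefixSum z (i + j + 1)) -
            max (prefixSum x i) (prefixSum z (i + j)) else 0) =
        min (prefixSum z (t + 1)) (prefixSum x (i + 1)) - max (prefixSum z t) (prefixSum x i) := by
      intro i _
      by_cases hw : i ≤ t ∧ t ≤ i + K
      · rw [sum_eq_single (t - i) (fun j _ hj => if_neg (by omega))
          (fun hj => absurd (mem_range.2 (by omega)) hj), if_pos (by omega),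
          show i + (t - i) = t by omega]
        omega
      · rw [hvanish i (by omega)]
        exact sum_eq_zero fun j hj => if_neg (by simp only [mem_range] at hj; omega)
    rw [sum_congr rfl hinner, sum_range_min_sub_max _ _ (prefixSum_mono x),
      prefixSum_of_length_le le_rfl, prefixSum_zero]
    have := (h (t + 1)).1
    have := prefixSum_le_sum x (t + 1)
    have := prefixSum_succ z t
    omega

theorem produces_iff {K : ℕ} {x z : List ℕ} :
    Produces K x z ↔ z.length = x.length + K ∧
      ∀ t, prefixSum z t ≤ prefixSum x t ∧ prefixSum x t ≤ prefixSum z (t + K) :=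
  ⟨fun h => ⟨h.1, Produces.prefixSum_le h⟩, fun h => produces_of_prefixSum_le h.1 h.2⟩

def Dominates (K : ℕ) (y x : List ℕ) : Prop :=
  x.length = y.length ∧
    ∀ t, prefixSum x t ≤ prefixSum y t ∧ prefixSum y t ≤ prefixSum x (t + K)

theorem producesPadded_iff_dominates {K : ℕ} {y x : List ℕ} :
    ProducesPadded K y x ↔ Dominates K y x := by
  simp [ProducesPadded, Dominates, produces_iff, prefixSum_append]

namespace Dominates

variable {K : ℕ}

lemma refl (x : List ℕ) : Dominates K x x :=
  ⟨rfl, fun _ => ⟨le_rfl, prefixSum_mono x (Nat.le_add_right _ K)⟩⟩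

lemma of_append_left {p y x : List ℕ} (h : Dominates K (p ++ y) (p ++ x)) : Dominates K y x := by
  refine ⟨by simpa using h.1, fun t => ?_⟩
  have h₁ := (h.2 (p.length + t)).1
  have h₂ := (h.2 (p.length + t)).2
  simp only [prefixSum_append, Nat.add_sub_cancel_left,
    show p.length + t + K - p.length = t + K by omega,
    prefixSum_of_length_le (Nat.le_add_right p.length t),
    prefixSum_of_length_le (show p.length ≤ p.length + t + K by omega)] at h₁ h₂
  omega

lemma lt_of_ne : ∀ {y x : List ℕ}, Dominates K y x → y ≠ x → x < y
  | [], x, h, hne => absurd (List.eq_nil_of_length_eq_zero h.1).symm hne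
  | _ :: _, [], _, _ => List.Lex.nil
  | a :: y, b :: x, h, hne => by
    have hba : b ≤ a := by simpa using (h.2 1).1
    rcases hba.lt_or_eq with hba | rfl
    · exact List.Lex.rel hba
    · exact List.Lex.cons (lt_of_ne (of_append_left (p := [b]) h) (by simpa using hne))

end Dominates

def removeEarliest : ℕ → List ℕ → List ℕ
  | _, [] => []
  | c, a :: x => (a - c) :: removeEarliest (c - a) x

@[simp] lemma length_removeEarliest (c : ℕ) (x : List ℕ) :
    (removeEarliest c x).length = x.length := by
  induction x generalizing c <;> simp [removeEarliest, *]

lemma prefixSum_removeEarliest (c : ℕ) (x : List ℕ) (t : ℕ) :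
    prefixSum (removeEarliest c x) t = prefixSum x t - c := by
  induction x generalizing c t with
  | nil => simp [removeEarliest, prefixSum]
  | cons a x ih =>
    cases t with
    | zero => simp
    | succ t => simp only [removeEarliest, prefixSum_cons_succ, ih]; omega

lemma le_of_mem_removeEarliest {N c : ℕ} {x : List ℕ} (hx : ∀ a ∈ x, a ≤ N) :
    ∀ b ∈ removeEarliest c x, b ≤ N := by
  induction x generalizing c with
  | nil => simp [removeEarliest]
  | cons a x ih =>
    simp only [List.mem_cons, forall_eq_or_imp] at hx
    simp only [removeEarliest, List.mem_cons, forall_eq_or_imp]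
    exact ⟨by omega, ih hx.2⟩

lemma replicate_zero_suffix_removeEarliest {m c : ℕ} {x : List ℕ}
    (hx : List.replicate m 0 <:+ x) : List.replicate m 0 <:+ removeEarliest c x := by
  obtain ⟨w, rfl⟩ := hx
  induction w generalizing c with
  | nil =>
    suffices ∀ c, removeEarliest c (List.replicate m 0) = List.replicate m 0 by simp [this]
    intro c
    induction m <;> simp [removeEarliest, List.replicate_succ, *]
  | cons a w ih => exact ih.trans (List.suffix_cons _ _)

lemma replicate_suffix_drop {α : Type*} {m k : ℕ} {a : α} {x : List α}
    (hx : List.replicate m a <:+ x) : List.replicate (min (x.length - k) m) a <:+ x.drop k :=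
  List.suffix_of_suffix_length_le
    ((List.suffix_replicate_iff.2 (by simp)).trans hx)
    (List.drop_suffix k x) (by simp)

lemma CNK_of_le {N K n : ℕ} (h : n ≤ K) : CNK N K n = {List.replicate n 0} := by
  rw [CNK, dif_pos h]

lemma mem_CNK_of_lt {N K n : ℕ} (h : K < n) {x : List ℕ} :
    x ∈ CNK N K n ↔ (∃ v ∈ CNK N K (n - 1), N :: v = x) ∨
      ∃ i < N, ∃ v ∈ CNK N K (n - K - 1), (i :: List.replicate K 0) ++ v = x := by
  rw [CNK, dif_neg h.not_ge]
  simp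

theorem isCode_CNK (N K n : ℕ) : IsCode N n (CNK N K n) := by
  induction n using Nat.strong_induction_on with
  | _ n ih =>
  intro x hx
  rcases le_or_gt n K with h | h
  · rw [CNK_of_le h, mem_singleton] at hx
    simp +contextual [hx]
  · rcases (mem_CNK_of_lt h).1 hx with ⟨v, hv, rfl⟩ | ⟨i, hi, v, hv, rfl⟩
    · obtain ⟨hl, hle⟩ := ih (n - 1) (by omega) v hv
      refine ⟨by simp [hl]; omega, by simpa using hle⟩
    · obtain ⟨hl, hle⟩ := ih (n - K - 1) (by omega) v hv
      refine ⟨by simp [hl]; omega, ?_⟩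
      simp only [List.cons_append, List.mem_cons, List.mem_append, List.mem_replicate]
      rintro a (rfl | ⟨-, rfl⟩ | ha)
      exacts [hi.le, Nat.zero_le N, hle a ha]

theorem isZeroPadded_CNK (N K n : ℕ) : IsZeroPadded K n (CNK N K n) := by
  induction n using Nat.strong_induction_on with
  | _ n ih =>
  intro x hx
  rcases le_or_gt n K with h | h
  · rw [CNK_of_le h, mem_singleton] at hx
    simp [hx, min_eq_left h]
  · rw [min_eq_right h.le]
    rcases (mem_CNK_of_lt h).1 hx with ⟨v, hv, rfl⟩ | ⟨i, -, v, hv, rfl⟩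
    · have hv' := ih (n - 1) (by omega) v hv
      rw [min_eq_right (by omega)] at hv'
      exact hv'.trans (List.suffix_cons N v)
    · have hv' := ih (n - K - 1) (by omega) v hv
      refine List.IsSuffix.trans ?_ (List.suffix_cons i _)
      rcases le_total K (n - K - 1) with hK | hK
      · rw [min_eq_right hK] at hv'
        exact hv'.trans (List.suffix_append _ _)
      · rw [min_eq_left hK] at hv'
        rw [← hv'.eq_of_length (by simp [(isCode_CNK N K _ v hv).1])]
        simp [List.suffix_replicate_iff]

lemma dominates_cons_replicate_append {K c j : ℕ} {x y : List ℕ} (hj : j + 1 ≤ x.length)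
    (hxc : prefixSum x (j + 1) ≤ c) (hcx : c ≤ prefixSum x (K + 1))
    (hy : Dominates K y ((removeEarliest c x).drop (j + 1))) :
    Dominates K (c :: (List.replicate j 0 ++ y)) x := by
  have hres : ∀ u, prefixSum ((removeEarliest c x).drop (j + 1)) u =
      prefixSum x (j + 1 + u) - c := by
    intro u
    rw [prefixSum_drop, prefixSum_removeEarliest, prefixSum_removeEarliest]
    omega
  refine ⟨?_, fun t => ?_⟩
  · have := hy.1
    simp only [List.length_drop, length_removeEarliest] at this
    simp only [List.length_cons, List.length_append, List.length_replicate]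
    omega
  cases t with
  | zero => simp
  | succ t =>
    rw [Nat.add_right_comm t 1 K]
    have := prefixSum_mono x (show K + 1 ≤ t + K + 1 by omega)
    simp only [prefixSum_cons_succ, prefixSum_append, prefixSum_replicate_zero,
      List.length_replicate, zero_add]
    rcases le_or_gt t j with htj | htj
    · have := prefixSum_mono x (show t + 1 ≤ j + 1 by omega)
      rw [Nat.sub_eq_zero_of_le htj, prefixSum_zero]
      omega
    · have hyt := hy.2 (t - j)
      rw [hres, hres, show j + 1 + (t - j) = t + 1 by omega,
        show j + 1 + (t - j + K) = t + K + 1 by omega] at hyt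
      omega

theorem exists_mem_CNK_dominates (N K n : ℕ) (x : List ℕ) (hlen : x.length = n)
    (hx : ∀ a ∈ x, a ≤ N) (hpad : List.replicate (min n K) 0 <:+ x) :
    ∃ y ∈ CNK N K n, Dominates K y x := by
  induction n using Nat.strong_induction_on generalizing x with
  | _ n ih =>
  rcases le_or_gt n K with h | h
  · rw [min_eq_left h] at hpad
    refine ⟨x, ?_, Dominates.refl x⟩
    rw [CNK_of_le h, mem_singleton, ← hpad.eq_of_length (by simp [hlen])]
  rw [min_eq_right h.le] at hpad
  have step : ∀ j c, j + 1 ≤ n → prefixSum x (j + 1) ≤ c → c ≤ prefixSum x (K + 1) →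
      ∃ y ∈ CNK N K (n - (j + 1)), Dominates K (c :: (List.replicate j 0 ++ y)) x := by
    intro j c hj hxc hcx
    obtain ⟨y, hy, hdom⟩ := ih (n - (j + 1)) (by omega) ((removeEarliest c x).drop (j + 1))
      (by simp [hlen]) (fun b hb => le_of_mem_removeEarliest hx b (List.mem_of_mem_drop hb))
      (by simpa [hlen] using
        replicate_suffix_drop (k := j + 1) (replicate_zero_suffix_removeEarliest (c := c) hpad))
    exact ⟨y, hy, dominates_cons_replicate_append (by omega) hxc hcx hdom⟩
  rcases lt_or_ge (prefixSum x (K + 1)) N with hc | hc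
  · obtain ⟨y, hy, hdom⟩ := step K _ (by omega) le_rfl le_rfl
    exact ⟨_, (mem_CNK_of_lt h).2 (Or.inr ⟨_, hc, y, hy, rfl⟩), hdom⟩
  · obtain ⟨a, x', rfl⟩ := List.exists_cons_of_length_pos (show 0 < x.length by omega)
    obtain ⟨y, hy, hdom⟩ := step 0 N (by omega) (by simpa using hx a (by simp)) hc
    exact ⟨N :: y, (mem_CNK_of_lt h).2 (Or.inl ⟨y, hy, rfl⟩), by simpa using hdom⟩

theorem eq_of_dominates_of_mem_CNK {N K n : ℕ} {y x : List ℕ} (hy : y ∈ CNK N K n)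
    (hx : x ∈ CNK N K n) (h : Dominates K y x) : y = x := by
  induction n using Nat.strong_induction_on generalizing y x with
  | _ n ih =>
  rcases le_or_gt n K with hn | hn
  · rw [CNK_of_le hn, mem_singleton] at hy hx
    rw [hy, hx]
  have h₁ := (h.2 1).1
  have h₂ := (h.2 1).2
  rw [add_comm 1 K] at h₂
  rcases (mem_CNK_of_lt hn).1 hy with ⟨v, hv, rfl⟩ | ⟨i, hi, v, hv, rfl⟩ <;>
    rcases (mem_CNK_of_lt hn).1 hx with ⟨w, hw, rfl⟩ | ⟨j, hj, w, hw, rfl⟩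
  · rw [ih (n - 1) (by omega) hv hw (h.of_append_left (p := [N]))]
  · simp [prefixSum_append] at h₂
    omega
  · simp at h₁
    omega
  · obtain rfl : i = j := by
      simp [prefixSum_append] at h₁ h₂
      omega
    rw [ih (n - K - 1) (by omega) hv hw h.of_append_left]

theorem greedySelect_eq {R : List ℕ → List ℕ → Prop} [DecidableRel R] {l : List (List ℕ)}
    (hl : l.Pairwise (· > ·)) {C : Finset (List ℕ)} (hCl : ∀ y ∈ C, y ∈ l)
    (hC : ∀ x ∈ l, x ∈ C ↔ ∀ y ∈ C, x < y → ¬ R y x) : greedySelect R l = C := by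
  induction l using greedySelect.induct R generalizing C with
  | case1 =>
    rw [greedySelect]
    exact (eq_empty_of_forall_notMem fun y hy => List.not_mem_nil (hCl y hy)).symm
  | case2 a rest ih =>
    rw [List.unattach_filter (g := fun y => !decide (R a y)) (hf := fun _ _ => rfl),
      List.unattach_attach] at ih
    rw [List.pairwise_cons] at hl
    have hmem : ∀ y, y ∈ rest.filter (fun y => !decide (R a y)) ↔ y ∈ rest ∧ ¬ R a y :=
      by simp
    have haC : a ∈ C := by
      refine (hC a List.mem_cons_self).2 fun y hy hay => absurd hay ?_
      rcases List.mem_cons.1 (hCl y hy) with rfl | hy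
      exacts [lt_irrefl y, lt_asymm (hl.1 y hy)]
    have hrest : ∀ {y}, y ∈ C → y ≠ a → y ∈ rest := fun hy hya =>
      (List.mem_cons.1 (hCl _ hy)).resolve_left hya
    rw [greedySelect, ih (hl.2.filter _) (C := C.erase a), insert_erase haC]
    · intro y hy
      obtain ⟨hya, hy⟩ := mem_erase.1 hy
      exact (hmem y).2 ⟨hrest hy hya, (hC y (hCl y hy)).1 hy a haC (hl.1 y (hrest hy hya))⟩
    · intro x hx
      obtain ⟨hx, hRax⟩ := (hmem x).1 hx
      have hxa : x ≠ a := fun h => lt_irrefl x (h ▸ hl.1 x hx)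
      rw [mem_erase, hC x (List.mem_cons_of_mem a hx)]
      constructor
      · rintro ⟨-, hxC⟩ y hy hxy
        exact hxC y (mem_of_mem_erase hy) hxy
      · intro hxC
        refine ⟨hxa, fun y hy hxy => ?_⟩
        by_cases hya : y = a
        · exact hya ▸ hRax
        · exact hxC y (mem_erase.2 ⟨hya, hy⟩) hxy

theorem mem_allSeqs {N n : ℕ} {x : List ℕ} :
    x ∈ allSeqs N n ↔ x.length = n ∧ ∀ a ∈ x, a ≤ N := by
  induction n generalizing x with
  | zero => cases x <;> simp [allSeqs]
  | succ n ih =>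
    cases x with
    | nil => simp [allSeqs]
    | cons a x => simp [allSeqs, ih, and_left_comm]

theorem pairwise_gt_allSeqs (N n : ℕ) : (allSeqs N n).Pairwise (· > ·) := by
  induction n with
  | zero => simp [allSeqs]
  | succ n ih =>
    rw [allSeqs, List.pairwise_flatMap, List.pairwise_reverse]
    refine ⟨fun a _ => List.pairwise_map.2 (ih.imp List.Lex.cons),
      List.pairwise_lt_range.imp ?_⟩
    intro a b hab x hx y hy
    obtain ⟨u, -, rfl⟩ := List.mem_map.1 hx
    obtain ⟨v, -, rfl⟩ := List.mem_map.1 hy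
    exact List.Lex.rel hab

end DTPC

open DTPC

theorem DNK_eq_CNK_general (N K : ℕ) (n : ℕ) : DNK N K n = CNK N K n := by
  classical
  refine greedySelect_eq ((pairwise_gt_allSeqs N n).filter _) (fun y hy => ?_) (fun x hx => ?_)
  · rw [List.mem_filter, mem_allSeqs, decide_eq_true_iff]
    exact ⟨isCode_CNK N K n y hy, isZeroPadded_CNK N K n y hy⟩
  · rw [List.mem_filter, mem_allSeqs, decide_eq_true_iff] at hx
    obtain ⟨⟨hlen, hle⟩, hpad⟩ := hx
    simp only [producesPadded_iff_dominates]
    constructor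
    · rintro hx y hy hxy hyx
      exact hxy.ne (eq_of_dominates_of_mem_CNK hy hx hyx).symm
    · intro hmax
      by_contra hx
      obtain ⟨y, hy, hyx⟩ := exists_mem_CNK_dominates N K n x hlen hle hpad
      have hyx' : y ≠ x := fun h => hx (h ▸ hy)
      exact hmax y hy (hyx.lt_of_ne hyx') hyx

/-- The greedily constructed code coincides with the recursively defined one:
`D_{N,K}(n) = C_{N,K}(n)` for every `n`. -/
theorem DNK_eq_CNK (N K : ℕ) (hN : 1 ≤ N) (n : ℕ) : DNK N K n = CNK N K n :=
  DNK_eq_CNK_general N K n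
end
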